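/- Fix η ∈ (0,1), n̄_B > 0, δ > 0, ε_n ∈ [0,1) with ε_n → 0, and c_cov = √(2η·n̄_B(1+η·n̄_B))/(1−η). Suppose the sequence M_n ≥ 0 satisfies M_n·(1−ε_n) − 1 ≤ n·C_χ(√δ·c_cov/√n) for all n, where C_χ(x) = g(η·x + (1−η)·n̄_B) − g((1−η)·n̄_B) and g(x) = (1+x)log₂(1+x) − x·log₂x. Then limsup_{n→∞} M_n/√(δ·n) ≤ c_cov·η·log₂(1 + 1/((1−η)·n̄_B)). -/

import Mathlib

/-!
The thermal entropy `g` is concave, so `Cχ x = g(ηx + a) - g(a)` lies below the tangent line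
`η x g'(a)` with `a = (1 - η) nB` and `g'(a) = log₂(1 + 1/a)`; concavity comes down to the log-sum
inequality, i.e. Jensen for `t ↦ t log t`. With the covert budget `x = √δ ccov / √n` this gives
`n Cχ x ≤ ccov η log₂(1 + 1/a) √(δn)`, and dividing Fano's bound `M (1 - ε) - 1 ≤ n Cχ x` by
`√(δn) → ∞` while `ε → 0` yields the limsup bound.
-/

open Real Filter Topology

noncomputable def thermalEntropy (x : ℝ) : ℝ := (1 + x) * logb 2 (1 + x) - x * logb 2 x

/-- The log-sum inequality for the pairs `(b, 1)` and `(a, 1)`. -/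
lemma one_add_mul_log_div_le_mul_log_div {a b : ℝ} (ha : 0 < a) (hb : 0 < b) :
    (1 + b) * log ((1 + b) / (1 + a)) ≤ b * log (b / a) := by
  have h1a : 0 < 1 + a := by linarith
  have hjensen := convexOn_mul_log.2 (Set.mem_Ici.2 (div_pos hb ha).le)
    (Set.mem_Ici.2 zero_le_one) (div_pos ha h1a).le (one_div_pos.2 h1a).le
    (by field_simp; ring)
  have hmid : a / (1 + a) * (b / a) + 1 / (1 + a) * 1 = (1 + b) / (1 + a) := by
    field_simp; ring
  simp only [smul_eq_mul, hmid, log_one, mul_zero, add_zero] at hjensen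
  have := mul_le_mul_of_nonneg_left hjensen h1a.le
  calc (1 + b) * log ((1 + b) / (1 + a))
      = (1 + a) * ((1 + b) / (1 + a) * log ((1 + b) / (1 + a))) := by field_simp
    _ ≤ (1 + a) * (a / (1 + a) * (b / a * log (b / a))) := this
    _ = b * log (b / a) := by field_simp

lemma thermalEntropy_le_tangent {a b : ℝ} (ha : 0 < a) (hb : 0 < b) :
    thermalEntropy b ≤ thermalEntropy a + (b - a) * logb 2 (1 + 1 / a) := by
  have hlogsum := one_add_mul_log_div_le_mul_log_div ha hb
  have h1a : 1 + 1 / a = (1 + a) / a := by field_simp; ring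
  rw [log_div (by linarith) (by linarith), log_div hb.ne' ha.ne'] at hlogsum
  simp only [thermalEntropy, logb, h1a, log_div (by linarith : 1 + a ≠ 0) ha.ne']
  rw [← sub_nonneg]
  have : 0 ≤ (b * (log b - log a) - (1 + b) * (log (1 + b) - log (1 + a))) / log 2 :=
    div_nonneg (by linarith) (log_pos one_lt_two).le
  convert this using 1
  ring

lemma limsup_div_le_of_mul_one_sub_sub_one_le {M ε s : ℕ → ℝ} {c : ℝ} (hM0 : ∀ n, 0 ≤ M n)
    (hε : Tendsto ε atTop (𝓝 0)) (hs : Tendsto s atTop atTop)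
    (hM : ∀ n, M n * (1 - ε n) - 1 ≤ c * s n) :
    limsup (fun n => M n / s n) atTop ≤ c := by
  have hbound : Tendsto (fun n => ((s n)⁻¹ + c) / (1 - ε n)) atTop (𝓝 c) := by
    have h := (hs.inv_tendsto_atTop.add_const c).div (tendsto_const_nhds.sub hε)
      (by norm_num : (1 : ℝ) - 0 ≠ 0)
    rwa [zero_add, sub_zero, div_one] at h
  have hle : ∀ᶠ n in atTop, M n / s n ≤ ((s n)⁻¹ + c) / (1 - ε n) := by
    filter_upwards [hs.eventually_gt_atTop 0, hε.eventually (gt_mem_nhds zero_lt_one)]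
      with n hsn hεn
    rw [div_le_div_iff₀ hsn (by linarith)]
    have := hM n
    calc M n * (1 - ε n) ≤ 1 + c * s n := by linarith
      _ = ((s n)⁻¹ + c) * s n := by field_simp
  have hnonneg : ∀ᶠ n in atTop, 0 ≤ M n / s n := by
    filter_upwards [hs.eventually_ge_atTop 0] with n hsn using div_nonneg (hM0 n) hsn
  calc limsup (fun n => M n / s n) atTop
      ≤ limsup (fun n => ((s n)⁻¹ + c) / (1 - ε n)) atTop :=
        limsup_le_limsup hle (isCoboundedUnder_le_of_eventually_le _ hnonneg)
          hbound.isBoundedUnder_le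
    _ = c := hbound.limsup_eq

theorem stmt_18_general (η nB δ : ℝ) (hη : η ∈ Set.Ioo (0:ℝ) 1) (hnB : 0 < nB) (hδ : 0 < δ)
    (ccov : ℝ) (hccov : ccov = Real.sqrt (2 * η * nB * (1 + η * nB)) / (1 - η))
    (g : ℝ → ℝ) (hg : ∀ x, g x = (1 + x) * Real.logb 2 (1 + x) - x * Real.logb 2 x)
    (Cχ : ℝ → ℝ) (hCχ : ∀ x, Cχ x = g (η * x + (1 - η) * nB) - g ((1 - η) * nB))
    (ε : ℕ → ℝ)
    (hεlim : Filter.Tendsto ε Filter.atTop (nhds 0))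
    (M : ℕ → ℝ) (hM0 : ∀ n, 0 ≤ M n)
    (hMn : ∀ n : ℕ, M n * (1 - ε n) - 1 ≤ (n : ℝ) * Cχ (Real.sqrt δ * ccov / Real.sqrt n)) :
    Filter.limsup (fun n : ℕ => M n / Real.sqrt (δ * n)) Filter.atTop ≤
      ccov * η * Real.logb 2 (1 + 1 / ((1 - η) * nB)) := by
  obtain ⟨hη0, hη1⟩ := hη
  have ha : 0 < (1 - η) * nB := mul_pos (by linarith) hnB
  have hccov0 : 0 ≤ ccov := hccov ▸ div_nonneg (sqrt_nonneg _) (by linarith)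
  have hg' : g = thermalEntropy := funext hg
  have hCχ_le : ∀ x, 0 ≤ x → Cχ x ≤ η * x * logb 2 (1 + 1 / ((1 - η) * nB)) := by
    intro x hx
    have := thermalEntropy_le_tangent ha (by positivity : 0 < η * x + (1 - η) * nB)
    rw [hCχ, hg']
    linarith
  refine limsup_div_le_of_mul_one_sub_sub_one_le hM0 hεlim
    (tendsto_sqrt_atTop.comp (tendsto_natCast_atTop_atTop.const_mul_atTop hδ)) fun n => ?_
  calc M n * (1 - ε n) - 1
      ≤ n * (η * (√δ * ccov / √n) * logb 2 (1 + 1 / ((1 - η) * nB))) :=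
        (hMn n).trans (mul_le_mul_of_nonneg_left (hCχ_le _ (by positivity)) n.cast_nonneg)
    _ = ccov * η * logb 2 (1 + 1 / ((1 - η) * nB)) * √δ * (n / √n) := by ring
    _ = ccov * η * logb 2 (1 + 1 / ((1 - η) * nB)) * √(δ * n) := by
        rw [div_sqrt, sqrt_mul hδ.le]
        ring

theorem stmt_18 (η nB δ : ℝ) (hη : η ∈ Set.Ioo (0:ℝ) 1) (hnB : 0 < nB) (hδ : 0 < δ)
    (ccov : ℝ) (hccov : ccov = Real.sqrt (2 * η * nB * (1 + η * nB)) / (1 - η))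
    (g : ℝ → ℝ) (hg : ∀ x, g x = (1 + x) * Real.logb 2 (1 + x) - x * Real.logb 2 x)
    (Cχ : ℝ → ℝ) (hCχ : ∀ x, Cχ x = g (η * x + (1 - η) * nB) - g ((1 - η) * nB))
    (ε : ℕ → ℝ) (hε0 : ∀ n, ε n ∈ Set.Ico (0:ℝ) 1)
    (hεlim : Filter.Tendsto ε Filter.atTop (nhds 0))
    (M : ℕ → ℝ) (hM0 : ∀ n, 0 ≤ M n)
    (hMn : ∀ n : ℕ, M n * (1 - ε n) - 1 ≤ (n : ℝ) * Cχ (Real.sqrt δ * ccov / Real.sqrt n)) :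
    Filter.limsup (fun n : ℕ => M n / Real.sqrt (δ * n)) Filter.atTop ≤
      ccov * η * Real.logb 2 (1 + 1 / ((1 - η) * nB)) :=
  stmt_18_general η nB δ hη hnB hδ ccov hccov g hg Cχ hCχ ε hεlim M hM0 hMn
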